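/- For every n ≥ 1, the set of all monotonic partial transformations of {1,…,n} is generated, as a semigroup under Kleisli composition, by the following 2n partial transformations: a with 1a undefined and ja = j−1 for 2 ≤ j ≤ n; for each 1 ≤ i ≤ n−1, b_i with i b_i = i+1, (i+1) b_i undefined, and j b_i = j for j ∉ {i, i+1}; for each 1 ≤ i ≤ n−1, c_i with i c_i = i+1 and j c_i = j for all j ≠ i; and d, the identity transformation. -/

import Mathlib

/-- A partial transformation `p : Fin n → Option (Fin n)` is monotonic if for
all `i ≤ j`, whenever `p i = some a` and `p j = some b`, then `a ≤ b`. -/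
def MonoP {n : ℕ} (p : Fin n → Option (Fin n)) : Prop :=
  ∀ i j : Fin n, i ≤ j → ∀ a b : Fin n, p i = some a → p j = some b → a ≤ b

/-- `GenByP S p` means the partial transformation `p` belongs to the subsemigroup
(under Kleisli composition of `Option`-valued maps) generated by `S`. -/
inductive GenByP {n : ℕ} (S : Set (Fin n → Option (Fin n))) :
    (Fin n → Option (Fin n)) → Prop
  | base {p : Fin n → Option (Fin n)} : p ∈ S → GenByP S p
  | comp {p q : Fin n → Option (Fin n)} : GenByP S p → GenByP S q →
      GenByP S (fun i => (p i).bind q)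

namespace MPSGen

def aF (n : ℕ) : Fin n → Option (Fin n) :=
  fun j : Fin n => if j.val = 0 then none
          else some (⟨j.val - 1, Nat.lt_of_le_of_lt (Nat.sub_le _ _) j.isLt⟩ : Fin n)

def bF {n : ℕ} (i : Fin n) (h : i.val + 1 < n) : Fin n → Option (Fin n) :=
  fun j : Fin n => if j = i then some (⟨i.val + 1, h⟩ : Fin n)
            else if j.val = i.val + 1 then none else some j

def cF {n : ℕ} (i : Fin n) (h : i.val + 1 < n) : Fin n → Option (Fin n) :=
  fun j : Fin n => if j = i then some (⟨i.val + 1, h⟩ : Fin n) else some j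

def dF (n : ℕ) : Fin n → Option (Fin n) := fun j : Fin n => some j

def S (n : ℕ) : Set (Fin n → Option (Fin n)) :=
  ({aF n} ∪
   {p : Fin n → Option (Fin n) | ∃ (i : Fin n) (h : i.val + 1 < n), p = bF i h} ∪
   {p : Fin n → Option (Fin n) | ∃ (i : Fin n) (h : i.val + 1 < n), p = cF i h} ∪
   {dF n})

variable {n : ℕ}

lemma genA : GenByP (S n) (aF n) := .base (Or.inl (Or.inl (Or.inl rfl)))
lemma genB (i : Fin n) (h : i.val + 1 < n) : GenByP (S n) (bF i h) :=
  .base (Or.inl (Or.inl (Or.inr ⟨i, h, rfl⟩)))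
lemma genC (i : Fin n) (h : i.val + 1 < n) : GenByP (S n) (cF i h) :=
  .base (Or.inl (Or.inr ⟨i, h, rfl⟩))
lemma genD : GenByP (S n) (dF n) := .base (Or.inr rfl)

lemma gen_congr {T : Set (Fin n → Option (Fin n))} {p q : Fin n → Option (Fin n)}
    (h : GenByP T p) (e : ∀ j, q j = p j) : GenByP T q := by
  have : q = p := funext e
  rw [this]; exact h

/-- the "R" property: some i not in the image with i+1 in the image -/
def Rgap (f : Fin n → Fin n) : Prop :=
  ∃ i : ℕ, i + 1 < n ∧ (∀ j, (f j).val ≠ i) ∧ (∃ j, (f j).val = i + 1)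

lemma descend {f : Fin n → Fin n} (hnR : ¬ Rgap f) :
    ∀ d v, (∃ j, (f j).val = v) → ∃ j, (f j).val = v - d := by
  intro d
  induction d with
  | zero => intro v hv; simpa using hv
  | succ d ihd =>
    intro v hv
    obtain ⟨j, hj⟩ := ihd v hv
    rcases Nat.eq_zero_or_pos (v - d) with h0 | h1
    · exact ⟨j, by omega⟩
    · have hlt : (v - d - 1) + 1 < n := by
        have := (f j).isLt; omega
      by_contra hc
      push_neg at hc
      exact hnR ⟨v - d - 1, hlt, fun j' e => hc j' (by omega), ⟨j, by omega⟩⟩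

def meas (f : Fin n → Fin n) : ℕ :=
  (n - (Finset.image f Finset.univ).card) * (n * n) + ∑ j, (f j).val

lemma gen_total (hn : 1 ≤ n) :
    ∀ N (f : Fin n → Fin n), Monotone f → meas f ≤ N →
      GenByP (S n) (fun j => some (f j)) := by
  intro N
  induction N using Nat.strong_induction_on with
  | _ N ih =>
  intro f hf hm
  by_cases hid : ∀ j, f j = j
  · exact gen_congr genD (fun j => by rw [hid]; rfl)
  by_cases hR : Rgap f
  · -- R-step: f = q ; c_i
    obtain ⟨i, hi1, hiA, j', hj'⟩ := hR
    set T := Finset.univ.filter (fun j => (f j).val = i + 1) with hT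
    have hTne : T.Nonempty := ⟨j', by simp [hT, hj']⟩
    set j0 := T.min' hTne with hj0def
    have hj0 : (f j0).val = i + 1 := (Finset.mem_filter.mp (T.min'_mem hTne)).2
    have hj0min : ∀ j, j < j0 → (f j).val ≠ i + 1 := by
      intro j hj hfj
      exact absurd (T.min'_le j (by simp [hT, hfj])) (not_le.mpr hj)
    set q : Fin n → Fin n := fun j => if j = j0 then ⟨i, by omega⟩ else f j with hq
    have hqmono : Monotone q := by
      intro x y hxy
      have hxy' : x.val ≤ y.val := hxy
      have hf' : (f x).val ≤ (f y).val := hf hxy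
      rw [Fin.le_def]
      simp only [hq]
      by_cases hx : x = j0 <;> by_cases hy : y = j0
      · rw [if_pos hx, if_pos hy]
      · rw [if_pos hx, if_neg hy]
        show (i : ℕ) ≤ (f y).val
        have hlt : j0 < y := by
          rw [Fin.lt_def]
          have h5 : y.val ≠ j0.val := fun e => hy (Fin.ext e)
          have h6 : j0.val ≤ y.val := hx ▸ hxy'
          omega
        have h2 : (f j0).val ≤ (f y).val := hf hlt.le
        omega
      · rw [if_neg hx, if_pos hy]
        show (f x).val ≤ (i : ℕ)
        have hlt : x < j0 := by
          rw [Fin.lt_def]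
          have h5 : x.val ≠ j0.val := fun e => hx (Fin.ext e)
          have h6 : x.val ≤ j0.val := hy ▸ hxy'
          omega
        have h3 := hj0min x hlt
        have h4 : (f x).val ≤ (f j0).val := hf hlt.le
        omega
      · rw [if_neg hx, if_neg hy]; exact hf'
    have hcomp : ∀ j, some (f j) = (some (q j)).bind (cF ⟨i, by omega⟩ hi1) := by
      intro j
      simp only [Option.bind_some, cF, hq]
      rcases eq_or_ne j j0 with rfl | hj
      · rw [if_pos rfl, if_pos rfl]
        exact congrArg some (Fin.ext (by simpa using hj0))
      · rw [if_neg hj, if_neg (by intro e; exact hiA j (by rw [e]))]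
    have hmq : meas q < meas f := by
      have hsum : (∑ j, (q j).val) + 1 = ∑ j, (f j).val := by
        rw [← Finset.sum_erase_add _ _ (Finset.mem_univ j0),
            ← Finset.sum_erase_add _ (fun j => (f j).val) (Finset.mem_univ j0)]
        have h1 : ∀ j ∈ Finset.univ.erase j0, (q j).val = (f j).val := by
          intro j hj
          have := Finset.ne_of_mem_erase hj
          simp only [hq, if_neg this]
        rw [Finset.sum_congr rfl h1]
        have h2 : (q j0).val = i := by simp [hq]
        omega
      have hcard : (Finset.image f Finset.univ).card ≤ (Finset.image q Finset.univ).card := by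
        have hins : insert (⟨i, by omega⟩ : Fin n) (Finset.image f Finset.univ)
            ⊆ insert (f j0) (Finset.image q Finset.univ) := by
          intro v hv
          rcases Finset.mem_insert.mp hv with rfl | hv
          · apply Finset.mem_insert_of_mem
            refine Finset.mem_image.mpr ⟨j0, Finset.mem_univ _, ?_⟩
            simp [hq]
          · obtain ⟨j, _, rfl⟩ := Finset.mem_image.mp hv
            rcases eq_or_ne j j0 with rfl | hj
            · exact Finset.mem_insert_self _ _
            · apply Finset.mem_insert_of_mem
              refine Finset.mem_image.mpr ⟨j, Finset.mem_univ _, ?_⟩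
              simp [hq, hj]
        have h1 : (Finset.image f Finset.univ).card + 1
            = (insert (⟨i, by omega⟩ : Fin n) (Finset.image f Finset.univ)).card := by
          rw [Finset.card_insert_of_notMem]
          intro hmem
          obtain ⟨j, _, hj⟩ := Finset.mem_image.mp hmem
          exact hiA j (by rw [hj])
        have h2 := Finset.card_le_card hins
        have h3 := Finset.card_insert_le (f j0) (Finset.image q Finset.univ)
        omega
      have hprod : (n - (Finset.image q Finset.univ).card) * (n*n)
          ≤ (n - (Finset.image f Finset.univ).card) * (n*n) :=
        Nat.mul_le_mul_right _ (by omega)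
      simp only [meas]
      omega
    exact gen_congr
      (GenByP.comp (ih (meas q) (lt_of_lt_of_le hmq hm) q hqmono le_rfl)
        (genC ⟨i, by omega⟩ hi1)) hcomp
  · -- no R gap
    push_neg at hid
    obtain ⟨jbad, hjbad⟩ := hid
    set K := Finset.univ.filter (fun j => f j ≠ j) with hK
    have hKne : K.Nonempty := ⟨jbad, by simp [hK, hjbad]⟩
    set k0 := K.min' hKne with hk0def
    have hk0 : f k0 ≠ k0 := by
      have := (Finset.mem_filter.mp (K.min'_mem hKne)).2
      simpa using this
    have hk0min : ∀ j, j < k0 → f j = j := by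
      intro j hj
      by_contra hc
      exact absurd (K.min'_le j (by simp [hK, hc])) (not_le.mpr hj)
    have hlt : (f k0).val < k0.val := by
      by_contra hge
      push_neg at hge
      have hne : (f k0).val ≠ k0.val := fun e => hk0 (Fin.ext e)
      obtain ⟨j1, hj1⟩ := descend hR ((f k0).val - k0.val) (f k0).val ⟨k0, rfl⟩
      have hj1' : (f j1).val = k0.val := by omega
      rcases lt_or_ge j1 k0 with h | h
      · have h9 := hk0min j1 h
        rw [h9] at hj1'
        rw [Fin.lt_def] at h
        omega
      · have h7 : (f k0).val ≤ (f j1).val := hf h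
        omega
    have hk0pos : 1 ≤ k0.val := by omega
    have hk0m1lt : k0.val - 1 < n := by have := k0.isLt; omega
    have hfk0m1 : f ⟨k0.val - 1, hk0m1lt⟩ = ⟨k0.val - 1, hk0m1lt⟩ :=
      hk0min _ (by rw [Fin.lt_def]; show k0.val - 1 < k0.val; omega)
    have hfk0 : (f k0).val = k0.val - 1 := by
      have h8 : (f ⟨k0.val - 1, hk0m1lt⟩).val ≤ (f k0).val :=
        hf (by rw [Fin.le_def]; show k0.val - 1 ≤ k0.val; omega)
      rw [hfk0m1] at h8
      simp at h8
      omega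
    rcases eq_or_lt_of_le hk0pos with hk1 | hk2
    · -- k0.val = 1 : combined step  g ; c_0 ; a
      have h2n : 1 < n := by have := k0.isLt; omega
      have h0n : 0 < n := by omega
      set iz : Fin n := ⟨0, h0n⟩ with hiz0
      have hizval : iz.val = 0 := rfl
      have hiz : iz.val + 1 < n := by omega
      have hfiz : f iz = iz := hk0min iz (show iz < k0 by rw [Fin.lt_def]; omega)
      have hfk0' : (f k0).val = 0 := by omega
      have factA : ∀ j, (f j).val + 1 < n := by
        by_contra hcc
        push_neg at hcc
        obtain ⟨jm, hjm⟩ := hcc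
        have hjm' : (f jm).val = n - 1 := by have := (f jm).isLt; omega
        have hsurj : Function.Surjective f := by
          intro v
          obtain ⟨j2, hj2⟩ := descend hR (n - 1 - v.val) (n-1) ⟨jm, hjm'⟩
          exact ⟨j2, Fin.ext (by have := v.isLt; omega)⟩
        have hinj : Function.Injective f := (Finite.injective_iff_surjective).mpr hsurj
        have he : iz = k0 := hinj (by
          rw [hfiz]
          exact (Fin.ext (by omega)).symm)
        have := congrArg Fin.val he
        omega
      set g : Fin n → Fin n := fun j =>
        if j.val = 0 then iz else ⟨(f j).val + 1, factA j⟩ with hg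
      have hgmono : Monotone g := by
        intro x y hxy
        have hxy' : x.val ≤ y.val := hxy
        have hf' : (f x).val ≤ (f y).val := hf hxy
        rw [Fin.le_def]
        simp only [hg]
        by_cases hx : x.val = 0
        · rw [if_pos hx]
          exact Nat.zero_le _
        · rw [if_neg hx, if_neg (show ¬ y.val = 0 by omega)]
          show (f x).val + 1 ≤ (f y).val + 1
          omega
      have hcomp : ∀ j, some (f j) = ((some (g j)).bind (cF iz hiz)).bind (aF n) := by
        intro j
        by_cases hj : j.val = 0
        · have hgj : g j = iz := by simp only [hg]; rw [if_pos hj]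
          simp only [Option.bind_some]
          rw [hgj]
          have hc1 : (cF iz hiz) iz = some ⟨iz.val + 1, hiz⟩ := by
            simp [cF]
          rw [hc1]
          simp only [Option.bind_some]
          have ha1 : aF n ⟨iz.val + 1, hiz⟩ = some iz := by
            simp only [aF]
            rw [if_neg (show ¬ ((⟨iz.val + 1, hiz⟩ : Fin n).val = 0) from by
              show ¬ (iz.val + 1 = 0); omega)]
            try exact congrArg some (Fin.ext (show iz.val + 1 - 1 = iz.val by omega))
          rw [ha1]
          have hje : j = iz := Fin.ext (by omega)
          rw [hje, hfiz]
        · have hgj : g j = ⟨(f j).val + 1, factA j⟩ := by simp only [hg]; rw [if_neg hj]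
          simp only [Option.bind_some]
          rw [hgj]
          have hc1 : (cF iz hiz) ⟨(f j).val + 1, factA j⟩
              = some ⟨(f j).val + 1, factA j⟩ := by
            simp only [cF]
            rw [if_neg (by
              intro e
              have h9 : (f j).val + 1 = iz.val := congrArg Fin.val e
              omega)]
          rw [hc1]
          simp only [Option.bind_some]
          simp only [aF]
          rw [if_neg (show ¬ ((⟨(f j).val + 1, factA j⟩ : Fin n).val = 0) from by
            show ¬ ((f j).val + 1 = 0); omega)]
          exact congrArg some (Fin.ext (show (f j).val = (f j).val + 1 - 1 by omega))
      -- cardinality bookkeeping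
      have hk0iz : k0 ≠ iz := by
        intro e; have h9 : k0.val = iz.val := congrArg Fin.val e; omega
      have hAeq : Finset.image f Finset.univ = Finset.image f (Finset.univ.erase iz) := by
        apply Finset.Subset.antisymm
        · intro v hv
          obtain ⟨j, _, rfl⟩ := Finset.mem_image.mp hv
          by_cases hj : j = iz
          · refine Finset.mem_image.mpr
              ⟨k0, Finset.mem_erase.mpr ⟨hk0iz, Finset.mem_univ _⟩, ?_⟩
            rw [hj, hfiz]
            exact Fin.ext (by omega)
          · exact Finset.mem_image.mpr
              ⟨j, Finset.mem_erase.mpr ⟨hj, Finset.mem_univ _⟩, rfl⟩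
        · exact Finset.image_subset_image (Finset.erase_subset _ _)
      have hBeq : Finset.image g Finset.univ
          = insert iz (Finset.image g (Finset.univ.erase iz)) := by
        conv_lhs => rw [← Finset.insert_erase (Finset.mem_univ iz)]
        rw [Finset.image_insert]
        have hgiz : g iz = iz := by simp [hg, hizval]
        rw [hgiz]
      have hnm : iz ∉ Finset.image g (Finset.univ.erase iz) := by
        intro hmem
        obtain ⟨j, hj, hje⟩ := Finset.mem_image.mp hmem
        have hjne := Finset.ne_of_mem_erase hj
        have hjval : ¬ (j.val = 0) := fun e => hjne (Fin.ext (by omega))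
        have h8 : (g j).val = (f j).val + 1 := by simp only [hg]; rw [if_neg hjval]
        have h9 : (g j).val = iz.val := congrArg Fin.val hje
        omega
      have hge : Finset.image g (Finset.univ.erase iz)
          = Finset.image (fun v : Fin n => if h : v.val + 1 < n then (⟨v.val + 1, h⟩ : Fin n) else v)
              (Finset.image f (Finset.univ.erase iz)) := by
        rw [Finset.image_image]
        apply Finset.image_congr
        intro j hj
        have hjne : j ≠ iz := Finset.ne_of_mem_erase (by exact hj)
        have hjval : ¬ (j.val = 0) := fun e => hjne (Fin.ext (by omega))
        simp only [hg, Function.comp_apply]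
        rw [if_neg hjval, dif_pos (factA j)]
      have hinj2 : Set.InjOn
          (fun v : Fin n => if h : v.val + 1 < n then (⟨v.val + 1, h⟩ : Fin n) else v)
          (Finset.image f (Finset.univ.erase iz)) := by
        intro v hv w hw e
        obtain ⟨jv, _, rfl⟩ := Finset.mem_image.mp (Finset.mem_coe.mp hv)
        obtain ⟨jw, _, rfl⟩ := Finset.mem_image.mp (Finset.mem_coe.mp hw)
        simp only at e
        rw [dif_pos (factA jv), dif_pos (factA jw)] at e
        have h9 : (f jv).val + 1 = (f jw).val + 1 := congrArg Fin.val e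
        exact Fin.ext (by omega)
      have hBcard : (Finset.image g Finset.univ).card
          = (Finset.image f Finset.univ).card + 1 := by
        rw [hBeq, Finset.card_insert_of_notMem hnm, hge,
          Finset.card_image_of_injOn hinj2, ← hAeq]
      have hAle : (Finset.image f Finset.univ).card ≤ n - 1 := by
        rw [hAeq]
        calc (Finset.image f (Finset.univ.erase iz)).card
            ≤ (Finset.univ.erase iz).card := Finset.card_image_le
          _ = n - 1 := by
              rw [Finset.card_erase_of_mem (Finset.mem_univ _), Finset.card_univ,
                Fintype.card_fin]
      have hsg : (∑ j, (g j).val) < n * n := by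
        have h1 : ∀ j ∈ Finset.univ, (g j).val ≤ n - 1 := fun j _ => by
          have := (g j).isLt; omega
        have h2 := Finset.sum_le_card_nsmul Finset.univ (fun j => (g j).val) (n - 1) h1
        rw [Finset.card_univ, Fintype.card_fin, smul_eq_mul] at h2
        have h4 : n * (n - 1) < n * n := by
          have h5 : (n : ℕ) - 1 < n := by omega
          exact mul_lt_mul_of_pos_left h5 h0n
        omega
      have hmq : meas g < meas f := by
        simp only [meas]
        rw [hBcard]
        have hsplit : (n - ((Finset.image f Finset.univ).card + 1)) * (n * n) + (n * n)
            = (n - (Finset.image f Finset.univ).card) * (n * n) := by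
          rw [← Nat.succ_mul]
          congr 1
          omega
        omega
      exact gen_congr (GenByP.comp (GenByP.comp
        (ih (meas g) (lt_of_lt_of_le hmq hm) g hgmono le_rfl) (genC iz hiz)) genA) hcomp
    · -- k0.val ≥ 2 : left peel with c_{k0-1}
      have hc : (k0.val - 1) + 1 < n := by have := k0.isLt; omega
      set km : Fin n := ⟨k0.val - 1, hk0m1lt⟩ with hkm
      have hkmval : km.val = k0.val - 1 := rfl
      have hk0km : k0 ≠ km := by
        intro e
        have h5 : k0.val = km.val := congrArg Fin.val e
        omega
      set q : Fin n → Fin n :=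
        fun j => if j = km then ⟨k0.val - 2, by have := k0.isLt; omega⟩ else f j with hq
      have hqk0 : q k0 = f k0 := by simp only [hq]; rw [if_neg hk0km]
      have hqmono : Monotone q := by
        intro x y hxy
        have hxy' : x.val ≤ y.val := hxy
        have hf' : (f x).val ≤ (f y).val := hf hxy
        rw [Fin.le_def]
        simp only [hq]
        by_cases hx : x = km <;> by_cases hy : y = km
        · rw [if_pos hx, if_pos hy]
        · rw [if_pos hx, if_neg hy]
          show k0.val - 2 ≤ (f y).val
          have hyge : k0.val ≤ y.val := by
            have h5 : y.val ≠ km.val := fun e => hy (Fin.ext e)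
            have h6 : km.val ≤ y.val := hx ▸ hxy'
            omega
          have h2 : (f k0).val ≤ (f y).val := hf (show k0 ≤ y from hyge)
          omega
        · rw [if_neg hx, if_pos hy]
          show (f x).val ≤ k0.val - 2
          have hxlt : x.val < km.val := by
            have h5 : x.val ≠ km.val := fun e => hx (Fin.ext e)
            have h6 : x.val ≤ km.val := hy ▸ hxy'
            omega
          have h7 : f x = x := hk0min x (show x < k0 by
            rw [Fin.lt_def]; omega)
          rw [h7]
          omega
        · rw [if_neg hx, if_neg hy]; exact hf'
      have hcomp : ∀ j, some (f j) = (cF km hc j).bind (fun x => some (q x)) := by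
        intro j
        simp only [cF]
        rcases eq_or_ne j km with rfl | hj
        · rw [if_pos rfl]
          simp only [Option.bind_some]
          have e1 : (⟨km.val + 1, hc⟩ : Fin n) = k0 := Fin.ext (by
            show km.val + 1 = k0.val; omega)
          rw [e1, hqk0]
          exact congrArg some (Fin.ext (by rw [hfk0m1]; omega))
        · rw [if_neg hj]
          simp only [Option.bind_some, hq]
          rw [if_neg hj]
      have hcard : (Finset.image f Finset.univ).card
          ≤ (Finset.image q Finset.univ).card := by
        apply Finset.card_le_card
        intro v hv
        obtain ⟨j, _, rfl⟩ := Finset.mem_image.mp hv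
        rcases eq_or_ne j km with rfl | hj
        · refine Finset.mem_image.mpr ⟨k0, Finset.mem_univ _, ?_⟩
          rw [hqk0]
          exact Fin.ext (by rw [hfk0m1]; omega)
        · refine Finset.mem_image.mpr ⟨j, Finset.mem_univ _, ?_⟩
          simp only [hq]; rw [if_neg hj]
      have hsum : (∑ j, (q j).val) + 1 = ∑ j, (f j).val := by
        rw [← Finset.sum_erase_add _ _ (Finset.mem_univ km),
            ← Finset.sum_erase_add _ (fun j => (f j).val) (Finset.mem_univ km)]
        have h1 : ∀ j ∈ Finset.univ.erase km, (q j).val = (f j).val := by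
          intro j hj
          have := Finset.ne_of_mem_erase hj
          simp only [hq, if_neg this]
        rw [Finset.sum_congr rfl h1]
        have h2 : (q km).val = k0.val - 2 := by simp [hq]
        have h3 : (f km).val = k0.val - 1 := by rw [hfk0m1]
        omega
      have hprod : (n - (Finset.image q Finset.univ).card) * (n*n)
          ≤ (n - (Finset.image f Finset.univ).card) * (n*n) :=
        Nat.mul_le_mul_right _ (by omega)
      have hmq : meas q < meas f := by simp only [meas]; omega
      exact gen_congr (GenByP.comp (genC km hc)
        (ih (meas q) (lt_of_lt_of_le hmq hm) q hqmono le_rfl)) hcomp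

lemma gen_mono (hn : 1 ≤ n) :
    ∀ N (p : Fin n → Option (Fin n)), MonoP p →
      (Finset.univ.filter (fun j => p j = none)).card ≤ N →
      GenByP (S n) p := by
  intro N
  induction N using Nat.strong_induction_on with
  | _ N ih =>
  intro p hp hc
  by_cases h0 : ∀ j, p j ≠ none
  · -- p is total : use gen_total
    have h0n : 0 < n := hn
    set f : Fin n → Fin n := fun j => (p j).getD ⟨0, h0n⟩ with hf
    have hpf : ∀ j, p j = some (f j) := by
      intro j
      cases hpj : p j with
      | none => exact absurd hpj (h0 j)
      | some v => simp [hf, hpj]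
    have hfm : Monotone f := fun x y hxy => hp x y hxy (f x) (f y) (hpf x) (hpf y)
    exact gen_congr (gen_total hn (meas f) f hfm le_rfl) hpf
  · push_neg at h0
    obtain ⟨jn, hjn⟩ := h0
    set E := Finset.univ.filter (fun j => p j = none) with hE
    have hEne : E.Nonempty := ⟨jn, by simp [hE, hjn]⟩
    set i0 := E.min' hEne with hi0def
    have hpi0 : p i0 = none := by
      have := (Finset.mem_filter.mp (E.min'_mem hEne)).2
      simpa using this
    have hmin : ∀ j, j < i0 → p j ≠ none := by
      intro j hj hjnone
      exact absurd (E.min'_le j (by simp [hE, hjnone])) (not_le.mpr hj)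
    have hElt : 0 < E.card := Finset.card_pos.mpr hEne
    by_cases hz : i0.val = 0
    · -- peel the generator a on the left
      set q : Fin n → Option (Fin n) := fun j =>
        if h : j.val + 1 < n then p ⟨j.val + 1, h⟩ else some ⟨n - 1, by omega⟩ with hq
      have hqm : MonoP q := by
        intro x y hxy a b ha hb
        have hxy' : x.val ≤ y.val := hxy
        rw [Fin.le_def]
        simp only [hq] at ha hb
        by_cases hx : x.val + 1 < n
        · rw [dif_pos hx] at ha
          by_cases hy : y.val + 1 < n
          · rw [dif_pos hy] at hb
            exact hp _ _ (show (⟨x.val+1,hx⟩:Fin n) ≤ ⟨y.val+1,hy⟩ from by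
              rw [Fin.le_def]; show x.val + 1 ≤ y.val + 1; omega) a b ha hb
          · rw [dif_neg hy] at hb
            have hb' : ((⟨n - 1, by omega⟩ : Fin n) : Fin n) = b := Option.some.inj hb
            have hbv : b.val = n - 1 := by rw [← hb']
            have := a.isLt
            omega
        · rw [dif_neg hx] at ha
          have hy : ¬ (y.val + 1 < n) := by omega
          rw [dif_neg hy] at hb
          have ha' : ((⟨n - 1, by omega⟩ : Fin n) : Fin n) = a := Option.some.inj ha
          have hb' : ((⟨n - 1, by omega⟩ : Fin n) : Fin n) = b := Option.some.inj hb
          have hav : a.val = n - 1 := by rw [← ha']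
          have hbv : b.val = n - 1 := by rw [← hb']
          omega
      have hcomp : ∀ j, p j = (aF n j).bind q := by
        intro j
        simp only [aF]
        by_cases hj : j.val = 0
        · rw [if_pos hj]
          have : j = i0 := Fin.ext (by omega)
          rw [this, hpi0]
          rfl
        · rw [if_neg hj]
          simp only [Option.bind_some, hq]
          have hjlt : (j.val - 1) + 1 < n := by have := j.isLt; omega
          rw [dif_pos hjlt]
          congr 1
          exact Fin.ext (by show j.val = j.val - 1 + 1; omega)
      -- measure decreases
      have hqcard : (Finset.univ.filter (fun j => q j = none)).card < E.card := by
        set Fq := Finset.univ.filter (fun j => q j = none) with hFq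
        have hkey : ∀ j ∈ Fq, ∃ h : j.val + 1 < n, p ⟨j.val + 1, h⟩ = none := by
          intro j hj
          have hjn : q j = none := by
            have := (Finset.mem_filter.mp hj).2
            simpa using this
          simp only [hq] at hjn
          by_cases h : j.val + 1 < n
          · rw [dif_pos h] at hjn
            exact ⟨h, hjn⟩
          · rw [dif_neg h] at hjn
            exact absurd hjn (by simp)
        have himg : Finset.image
            (fun j : Fin n => if h : j.val + 1 < n then (⟨j.val + 1, h⟩ : Fin n) else j) Fq
            ⊆ E.erase i0 := by
          intro v hv
          obtain ⟨j, hj, rfl⟩ := Finset.mem_image.mp hv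
          obtain ⟨h1, h2⟩ := hkey j hj
          rw [dif_pos h1]
          refine Finset.mem_erase.mpr ⟨?_, ?_⟩
          · intro e
            have : j.val + 1 = i0.val := congrArg Fin.val e
            omega
          · simp [hE, h2]
        have hicard : (Finset.image
            (fun j : Fin n => if h : j.val + 1 < n then (⟨j.val + 1, h⟩ : Fin n) else j) Fq).card
            = Fq.card := by
          apply Finset.card_image_of_injOn
          intro x hx y hy e
          obtain ⟨hx1, _⟩ := hkey x (Finset.mem_coe.mp hx)
          obtain ⟨hy1, _⟩ := hkey y (Finset.mem_coe.mp hy)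
          simp only at e
          rw [dif_pos hx1, dif_pos hy1] at e
          have : x.val + 1 = y.val + 1 := congrArg Fin.val e
          exact Fin.ext (by omega)
        have h3 := Finset.card_le_card himg
        rw [hicard] at h3
        have h4 : (E.erase i0).card = E.card - 1 :=
          Finset.card_erase_of_mem (E.min'_mem hEne)
        omega
      exact gen_congr (GenByP.comp genA
        (ih (E.card - 1) (by omega) q hqm (by omega))) hcomp
    · -- i0.val ≥ 1 : peel the generator b_{i0-1} on the left
      have hpos : 1 ≤ i0.val := by omega
      have him1 : i0.val - 1 < n := by have := i0.isLt; omega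
      set im1 : Fin n := ⟨i0.val - 1, him1⟩ with him1def
      have him1v : im1.val = i0.val - 1 := rfl
      have hb : im1.val + 1 < n := by have := i0.isLt; omega
      have hpim1 : p im1 ≠ none := hmin im1 (by rw [Fin.lt_def]; omega)
      obtain ⟨v0, hv0⟩ := Option.ne_none_iff_exists'.mp hpim1
      set q : Fin n → Option (Fin n) := fun j =>
        if j = i0 ∨ j = im1 then some v0 else p j with hq
      have hqm : MonoP q := by
        intro x y hxy a b ha hb'
        have hxy' : x.val ≤ y.val := hxy
        simp only [hq] at ha hb'
        by_cases hx : x = i0 ∨ x = im1 <;> by_cases hy : y = i0 ∨ y = im1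
        · rw [if_pos hx] at ha
          rw [if_pos hy] at hb'
          have : a = v0 := (Option.some.inj ha).symm
          have : b = v0 := (Option.some.inj hb').symm
          simp_all
        · rw [if_pos hx] at ha
          rw [if_neg hy] at hb'
          have hav : a = v0 := (Option.some.inj ha).symm
          subst hav
          -- im1 ≤ y
          refine hp im1 y ?_ a b hv0 hb'
          rw [Fin.le_def]
          rcases hx with rfl | rfl <;> omega
        · rw [if_neg hx] at ha
          rw [if_pos hy] at hb'
          have hbv : b = v0 := (Option.some.inj hb').symm
          subst hbv
          refine hp x im1 ?_ a b ha hv0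
          rw [Fin.le_def]
          push_neg at hx
          have h5 : x.val ≠ i0.val := fun e => hx.1 (Fin.ext e)
          have h6 : x.val ≠ im1.val := fun e => hx.2 (Fin.ext e)
          rcases hy with rfl | rfl
          · omega
          · omega
        · rw [if_neg hx] at ha
          rw [if_neg hy] at hb'
          exact hp x y hxy a b ha hb'
      have hcomp : ∀ j, p j = (bF im1 hb j).bind q := by
        intro j
        simp only [bF]
        by_cases hj1 : j = im1
        · rw [if_pos hj1]
          simp only [Option.bind_some, hq]
          rw [if_pos (Or.inl (Fin.ext (show im1.val + 1 = i0.val by omega)))]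
          rw [hj1, hv0]
        · rw [if_neg hj1]
          by_cases hj2 : j.val = im1.val + 1
          · rw [if_pos hj2]
            have : j = i0 := Fin.ext (by omega)
            rw [this, hpi0]
            rfl
          · rw [if_neg hj2]
            simp only [Option.bind_some, hq]
            rw [if_neg]
            push_neg
            constructor
            · intro e
              exact hj2 (by rw [e]; omega)
            · exact hj1
      have hqcard : (Finset.univ.filter (fun j => q j = none)) = E.erase i0 := by
        ext j
        simp only [Finset.mem_filter, Finset.mem_erase, Finset.mem_univ, true_and, hq, hE]
        by_cases hj : j = i0 ∨ j = im1
        · rw [if_pos hj]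
          constructor
          · intro h; exact absurd h (by simp)
          · rintro ⟨h1, h2⟩
            rcases hj with rfl | rfl
            · exact absurd rfl h1
            · exact absurd h2 (by rw [hv0]; simp)
        · rw [if_neg hj]
          push_neg at hj
          constructor
          · intro h; exact ⟨hj.1, h⟩
          · exact fun h => h.2
      have hqlt : (Finset.univ.filter (fun j => q j = none)).card = E.card - 1 := by
        rw [hqcard]
        exact Finset.card_erase_of_mem (E.min'_mem hEne)
      exact gen_congr (GenByP.comp (genB im1 hb)
        (ih (E.card - 1) (by omega) q hqm (by omega))) hcomp

lemma monoA : MonoP (aF n) := by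
  intro i j hij a b ha hb
  rw [Fin.le_def] at hij ⊢
  simp only [aF] at ha hb
  split_ifs at ha hb <;> simp_all [Fin.ext_iff] <;> omega

lemma monoB (i : Fin n) (h : i.val + 1 < n) : MonoP (bF i h) := by
  intro x y hxy a b ha hb
  rw [Fin.le_def] at hxy ⊢
  simp only [bF] at ha hb
  split_ifs at ha hb <;> simp_all [Fin.ext_iff] <;> omega

lemma monoC (i : Fin n) (h : i.val + 1 < n) : MonoP (cF i h) := by
  intro x y hxy a b ha hb
  rw [Fin.le_def] at hxy ⊢
  simp only [cF] at ha hb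
  split_ifs at ha hb <;> simp_all [Fin.ext_iff] <;> omega

lemma monoD : MonoP (dF n) := by
  intro x y hxy a b ha hb
  simp only [dF, Option.some.injEq] at ha hb
  rw [← ha, ← hb]
  exact hxy

lemma monoComp {p q : Fin n → Option (Fin n)} (hp : MonoP p) (hq : MonoP q) :
    MonoP (fun i => (p i).bind q) := by
  intro x y hxy a b ha hb
  simp only [Option.bind_eq_some_iff] at ha hb
  obtain ⟨u, hu, hua⟩ := ha
  obtain ⟨v, hv, hvb⟩ := hb
  exact hq u v (hp x y hxy u v hu hv) a b hua hvb

end MPSGen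

/-- For every `n ≥ 1`, the semigroup of all monotonic partial transformations of
`{1,…,n}` (0-indexed on `Fin n`) is generated by the `2n` partial
transformations `a` (undefined at the first element, `j ↦ j-1` otherwise),
`b_i` (`i ↦ i+1`, undefined at `i+1`, identity elsewhere),
`c_i` (`i ↦ i+1`, identity elsewhere), and the identity `d`. -/
theorem monotone_partial_semigroup_generators (n : ℕ) (hn : 1 ≤ n) :
    {p : Fin n → Option (Fin n) | GenByP
      (({fun j : Fin n => if j.val = 0 then none
          else some (⟨j.val - 1, by have := j.isLt; omega⟩ : Fin n)} ∪
        {p : Fin n → Option (Fin n) | ∃ (i : Fin n) (h : i.val + 1 < n),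
          p = fun j : Fin n => if j = i then some (⟨i.val + 1, h⟩ : Fin n)
            else if j.val = i.val + 1 then none else some j} ∪
        {p : Fin n → Option (Fin n) | ∃ (i : Fin n) (h : i.val + 1 < n),
          p = fun j : Fin n => if j = i then some (⟨i.val + 1, h⟩ : Fin n)
            else some j} ∪
        {fun j : Fin n => some j}) : Set (Fin n → Option (Fin n))) p}
    = {p : Fin n → Option (Fin n) | MonoP p} := by
  ext p
  simp only [Set.mem_setOf_eq]
  constructor
  · intro h
    induction h with
    | base hmem =>
      rcases hmem with (((ha | hb) | hc) | hd)
      · rw [Set.mem_singleton_iff] at ha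
        rw [ha]
        exact MPSGen.monoA
      · obtain ⟨i, hi, rfl⟩ := hb
        exact MPSGen.monoB i hi
      · obtain ⟨i, hi, rfl⟩ := hc
        exact MPSGen.monoC i hi
      · rw [Set.mem_singleton_iff] at hd
        rw [hd]
        exact MPSGen.monoD
    | comp hp hq ihp ihq => exact MPSGen.monoComp ihp ihq
  · intro h
    exact MPSGen.gen_mono hn _ p h le_rfl
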